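/- Let c be a real constant with ν_obs + c > 0 and define σ̂²_SI,M = σ²·(U_obs/(n − 1))·(1 + (U_imp + (n_obs/n)·n_mis·Z̄_imp²)/(ν_obs + c)). Then, almost surely, the conditional expectation of σ̂²_SI,M given the σ-algebra generated by U_obs equals σ²·(U_obs/(n − 1))·(1 + (n_mis − 1 + n_obs/n)/(n_obs + c − 1)); this gives the infinite-imputation ML-imputation variance estimator. -/

import Mathlib

open MeasureTheory ProbabilityTheory NNReal

/-!
The estimator factors as `f(U_obs) · g(Z_imp, U_imp)`. The first factor is `σ(U_obs)`-measurable
and pulls out of the conditional expectation; the second is independent of `U_obs`, so its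
conditional expectation is its mean `1 + (E U_imp + (n_obs/n) n_mis E Z_imp²)/(ν_obs + c)`, where
`E U_imp = n_mis - 1` is the mean of a chi-squared variable and `E Z_imp² = 1/n_mis` its variance.
-/

namespace ProbabilityTheory

open Real

variable {a r : ℝ}

lemma integral_gammaPDFReal_eq_one (ha : 0 < a) (hr : 0 < r) : ∫ x, gammaPDFReal a r x = 1 := by
  rw [integral_eq_lintegral_of_nonneg_ae (.of_forall (gammaPDFReal_nonneg ha hr))
    (measurable_gammaPDFReal a r).aestronglyMeasurable]
  simp [← gammaPDF.eq_def, lintegral_gammaPDF_eq_one ha hr]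

lemma integrable_gammaPDFReal (ha : 0 < a) (hr : 0 < r) : Integrable (gammaPDFReal a r) :=
  .of_integral_ne_zero (by simp [integral_gammaPDFReal_eq_one ha hr])

-- Since `Γ(a + 1) = a Γ(a)`, the size-biased gamma density is again a gamma density.
lemma gammaPDFReal_mul_self (ha : 0 < a) (hr : r ≠ 0) (x : ℝ) :
    gammaPDFReal a r x * x = a / r * gammaPDFReal (a + 1) r x := by
  unfold gammaPDFReal
  split_ifs with hx
  · have hxa : x ^ a = x ^ (a - 1) * x := by
      rw [← rpow_add_one' hx (by linarith), sub_add_cancel]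
    rw [add_sub_cancel_right, Gamma_add_one ha.ne', rpow_add_one hr, hxa]
    field_simp [(Gamma_pos_of_pos ha).ne']
  · simp

lemma measurable_gammaPDF (a r : ℝ) : Measurable (gammaPDF a r) :=
  (measurable_gammaPDFReal a r).ennreal_ofReal

lemma integral_gammaMeasure (ha : 0 < a) (hr : 0 < r) (g : ℝ → ℝ) :
    ∫ x, g x ∂gammaMeasure a r = ∫ x, gammaPDFReal a r x * g x := by
  rw [gammaMeasure, integral_withDensity_eq_integral_toReal_smul
    (measurable_gammaPDF a r) (.of_forall fun _ => ENNReal.ofReal_lt_top)]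
  simp [gammaPDF, ENNReal.toReal_ofReal (gammaPDFReal_nonneg ha hr _)]

lemma integrable_gammaMeasure_iff (ha : 0 < a) (hr : 0 < r) {g : ℝ → ℝ} :
    Integrable g (gammaMeasure a r) ↔ Integrable (fun x => gammaPDFReal a r x * g x) := by
  rw [gammaMeasure, integrable_withDensity_iff_integrable_smul'
    (measurable_gammaPDF a r) (.of_forall fun _ => ENNReal.ofReal_lt_top)]
  simp [gammaPDF, ENNReal.toReal_ofReal (gammaPDFReal_nonneg ha hr _)]

lemma integrable_id_gammaMeasure (ha : 0 < a) (hr : 0 < r) : Integrable id (gammaMeasure a r) := by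
  rw [integrable_gammaMeasure_iff ha hr]
  simp_rw [id, gammaPDFReal_mul_self ha hr.ne']
  exact (integrable_gammaPDFReal (by linarith) hr).const_mul _

lemma integral_id_gammaMeasure (ha : 0 < a) (hr : 0 < r) :
    ∫ x, x ∂gammaMeasure a r = a / r := by
  simp_rw [integral_gammaMeasure ha hr, gammaPDFReal_mul_self ha hr.ne']
  rw [integral_const_mul, integral_gammaPDFReal_eq_one (by linarith) hr, mul_one]

lemma integral_sub_sq_gaussianReal (m : ℝ) (v : ℝ≥0) :
    ∫ x, (x - m) ^ 2 ∂gaussianReal m v = v := by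
  have := variance_fun_id_gaussianReal (μ := m) (v := v)
  rw [variance_eq_integral measurable_id'.aemeasurable] at this
  simpa [integral_id_gaussianReal] using this

section RandomVariables

variable {Ω : Type*} [MeasurableSpace Ω] {P : Measure Ω} {X : Ω → ℝ}

lemma integrable_of_map_eq_gammaMeasure (hX : Measurable X) (hXlaw : P.map X = gammaMeasure a r)
    (ha : 0 < a) (hr : 0 < r) : Integrable X P :=
  (integrable_map_measure aestronglyMeasurable_id hX.aemeasurable).mp
    (hXlaw ▸ integrable_id_gammaMeasure ha hr)

lemma integral_of_map_eq_gammaMeasure (hX : Measurable X) (hXlaw : P.map X = gammaMeasure a r)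
    (ha : 0 < a) (hr : 0 < r) : ∫ ω, X ω ∂P = a / r := by
  rw [← integral_id_gammaMeasure ha hr, ← hXlaw]
  exact (integral_map hX.aemeasurable aestronglyMeasurable_id).symm

variable {m : ℝ} {v : ℝ≥0}

lemma integrable_sub_sq_of_map_eq_gaussianReal (hX : Measurable X)
    (hXlaw : P.map X = gaussianReal m v) : Integrable (fun ω => (X ω - m) ^ 2) P := by
  have hsq : Integrable (fun x => (x - m) ^ 2) (gaussianReal m v) :=
    ((memLp_id_gaussianReal 2).sub (memLp_const m)).integrable_sq
  exact (integrable_map_measure (by fun_prop) hX.aemeasurable).mp (hXlaw ▸ hsq)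

lemma integral_sub_sq_of_map_eq_gaussianReal (hX : Measurable X)
    (hXlaw : P.map X = gaussianReal m v) : ∫ ω, (X ω - m) ^ 2 ∂P = v := by
  rw [← integral_sub_sq_gaussianReal m v, ← hXlaw, integral_map hX.aemeasurable (by fun_prop)]

variable {U : Ω → ℝ} {k : ℝ}

lemma integrable_add_mul_sq_of_map_eq (t : ℝ) (hU : Measurable U) (hX : Measurable X)
    (hUlaw : P.map U = gammaMeasure (k / 2) (1 / 2)) (hXlaw : P.map X = gaussianReal 0 v)
    (hk : 0 < k) : Integrable (fun ω => U ω + t * X ω ^ 2) P := by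
  have hX_sq : Integrable (fun ω => X ω ^ 2) P := by
    simpa using integrable_sub_sq_of_map_eq_gaussianReal hX hXlaw
  exact (integrable_of_map_eq_gammaMeasure hU hUlaw (by linarith) one_half_pos).add
    (hX_sq.const_mul t)

lemma integral_add_mul_sq_of_map_eq (t : ℝ) (hU : Measurable U) (hX : Measurable X)
    (hUlaw : P.map U = gammaMeasure (k / 2) (1 / 2)) (hXlaw : P.map X = gaussianReal 0 v)
    (hk : 0 < k) : ∫ ω, U ω + t * X ω ^ 2 ∂P = k + t * v := by
  have hX_sq : Integrable (fun ω => X ω ^ 2) P := by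
    simpa using integrable_sub_sq_of_map_eq_gaussianReal hX hXlaw
  have hEX_sq : ∫ ω, X ω ^ 2 ∂P = v := by
    simpa using integral_sub_sq_of_map_eq_gaussianReal hX hXlaw
  rw [integral_add (integrable_of_map_eq_gammaMeasure hU hUlaw (by linarith) one_half_pos)
    (hX_sq.const_mul t), integral_const_mul, hEX_sq,
    integral_of_map_eq_gammaMeasure hU hUlaw (by linarith) one_half_pos]
  ring

end RandomVariables

lemma condExp_comap_mul_of_indepFun {Ω α β : Type*} [MeasurableSpace Ω] [MeasurableSpace α]
    [MeasurableSpace β] {P : Measure Ω} [IsProbabilityMeasure P] {X : Ω → α} {Y : Ω → β}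
    {f : α → ℝ} {g : β → ℝ} (hX : Measurable X) (hY : Measurable Y) (hf : Measurable f)
    (hg : Measurable g) (hXY : IndepFun X Y P) (hfX : Integrable (fun ω => f (X ω)) P)
    (hgY : Integrable (fun ω => g (Y ω)) P) :
    P[fun ω => f (X ω) * g (Y ω) | MeasurableSpace.comap X inferInstance]
      =ᵐ[P] fun ω => f (X ω) * ∫ ω', g (Y ω') ∂P := by
  have hfX_meas : StronglyMeasurable[MeasurableSpace.comap X inferInstance] (fun ω => f (X ω)) :=
    (hf.comp (comap_measurable X)).stronglyMeasurable
  have hgY_meas : StronglyMeasurable[MeasurableSpace.comap Y inferInstance] (fun ω => g (Y ω)) :=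
    (hg.comp (comap_measurable Y)).stronglyMeasurable
  have hprod : Integrable (fun ω => f (X ω) * g (Y ω)) P :=
    (hXY.comp hf hg).integrable_mul hfX hgY
  exact (condExp_mul_of_stronglyMeasurable_left hfX_meas hprod hgY).trans
    (.mul .rfl (condExp_indep_eq hY.comap_le hX.comap_le hgY_meas hXY.symm))

end ProbabilityTheory

open ProbabilityTheory

theorem stmt14_general
    {Ω : Type*} [MeasurableSpace Ω] (P : Measure Ω) [IsProbabilityMeasure P]
    (σ : ℝ)
    (n_obs n_mis : ℕ) (hnobs : 2 ≤ n_obs) (hnmis : 2 ≤ n_mis)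
    (U_obs Z_obs Z_imp U_imp : Ω → ℝ)
    (hUmeas : Measurable U_obs) (hZmeas : Measurable Z_obs)
    (hZimpmeas : Measurable Z_imp) (hUimpmeas : Measurable U_imp)
    (hU : P.map U_obs = gammaMeasure (((n_obs : ℝ) - 1) / 2) (1 / 2))
    (hZimp : P.map Z_imp = gaussianReal 0 (1 / (n_mis : ℝ≥0)))
    (hUimp : P.map U_imp = gammaMeasure (((n_mis : ℝ) - 1) / 2) (1 / 2))
    (hindep : iIndepFun ![U_obs, Z_obs, Z_imp, U_imp] P)
    (c : ℝ) :
    P[(fun ω => σ ^ 2 * (U_obs ω / (((n_obs : ℝ) + (n_mis : ℝ)) - 1))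
        * (1 + (U_imp ω + ((n_obs : ℝ) / ((n_obs : ℝ) + (n_mis : ℝ)))
            * (n_mis : ℝ) * Z_imp ω ^ 2) / (((n_obs : ℝ) - 1) + c)))
      | MeasurableSpace.comap U_obs inferInstance]
    =ᵐ[P] fun ω => σ ^ 2 * (U_obs ω / (((n_obs : ℝ) + (n_mis : ℝ)) - 1))
        * (1 + ((n_mis : ℝ) - 1 + (n_obs : ℝ) / ((n_obs : ℝ) + (n_mis : ℝ)))
            / ((n_obs : ℝ) + c - 1)) := by
  have hn_obs : (2 : ℝ) ≤ n_obs := by exact_mod_cast hnobs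
  have hn_mis : (2 : ℝ) ≤ n_mis := by exact_mod_cast hnmis
  have hmeas : ∀ i, Measurable (![U_obs, Z_obs, Z_imp, U_imp] i) := by
    intro i; fin_cases i <;> assumption
  have hindep_imp : IndepFun U_obs (fun ω => (Z_imp ω, U_imp ω)) P :=
    (hindep.indepFun_prodMk hmeas 2 3 0 (by decide) (by decide)).symm
  have hUobs_int := integrable_of_map_eq_gammaMeasure hUmeas hU (by linarith) one_half_pos
  have hV_int := integrable_add_mul_sq_of_map_eq ((n_obs / (n_obs + n_mis : ℝ)) * n_mis)
    hUimpmeas hZimpmeas hUimp hZimp (by linarith)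
  have hEG : ∫ ω, (1 + (U_imp ω + (n_obs / (n_obs + n_mis : ℝ)) * n_mis * Z_imp ω ^ 2)
      / ((n_obs - 1 : ℝ) + c)) ∂P
      = 1 + (n_mis - 1 + n_obs / (n_obs + n_mis : ℝ)) / (n_obs + c - 1) := by
    rw [integral_add (integrable_const 1) (hV_int.div_const _), integral_div,
      integral_add_mul_sq_of_map_eq _ hUimpmeas hZimpmeas hUimp hZimp (by linarith),
      integral_const, probReal_univ, one_smul, sub_add_eq_add_sub]
    push_cast
    field_simp
    ring
  refine (condExp_comap_mul_of_indepFun (f := fun u => σ ^ 2 * (u / ((n_obs + n_mis : ℝ) - 1)))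
    (g := fun p : ℝ × ℝ => 1 + (p.2 + (n_obs / (n_obs + n_mis : ℝ)) * n_mis * p.1 ^ 2)
      / ((n_obs - 1 : ℝ) + c))
    hUmeas (hZimpmeas.prodMk hUimpmeas) (by fun_prop) (by fun_prop) hindep_imp
    ((hUobs_int.div_const _).const_mul _)
    ((integrable_const 1).add (hV_int.div_const _))).trans (.of_eq ?_)
  simp only [hEG]

/-- the conditional expectation of the single-imputation ML-imputation
variance estimator given the sigma-algebra generated by U_obs (the infinite-imputation
ML-imputation variance estimator). -/
theorem stmt14
    {Ω : Type*} [MeasurableSpace Ω] (P : Measure Ω) [IsProbabilityMeasure P]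
    (μ σ : ℝ) (hσ : 0 < σ)
    (n_obs n_mis : ℕ) (hnobs : 2 ≤ n_obs) (hnmis : 2 ≤ n_mis)
    (U_obs Z_obs Z_imp U_imp : Ω → ℝ)
    (hUmeas : Measurable U_obs) (hZmeas : Measurable Z_obs)
    (hZimpmeas : Measurable Z_imp) (hUimpmeas : Measurable U_imp)
    (hU : P.map U_obs = gammaMeasure (((n_obs : ℝ) - 1) / 2) (1 / 2))
    (hZ : P.map Z_obs = gaussianReal 0 (1 / (n_obs : ℝ≥0)))
    (hZimp : P.map Z_imp = gaussianReal 0 (1 / (n_mis : ℝ≥0)))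
    (hUimp : P.map U_imp = gammaMeasure (((n_mis : ℝ) - 1) / 2) (1 / 2))
    (hindep : iIndepFun ![U_obs, Z_obs, Z_imp, U_imp] P)
    (c : ℝ) (hc : 0 < ((n_obs : ℝ) - 1) + c) :
    P[(fun ω => σ ^ 2 * (U_obs ω / (((n_obs : ℝ) + (n_mis : ℝ)) - 1))
        * (1 + (U_imp ω + ((n_obs : ℝ) / ((n_obs : ℝ) + (n_mis : ℝ)))
            * (n_mis : ℝ) * Z_imp ω ^ 2) / (((n_obs : ℝ) - 1) + c)))
      | MeasurableSpace.comap U_obs inferInstance]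
    =ᵐ[P] fun ω => σ ^ 2 * (U_obs ω / (((n_obs : ℝ) + (n_mis : ℝ)) - 1))
        * (1 + ((n_mis : ℝ) - 1 + (n_obs : ℝ) / ((n_obs : ℝ) + (n_mis : ℝ)))
            / ((n_obs : ℝ) + c - 1)) :=
  stmt14_general P σ n_obs n_mis hnobs hnmis U_obs Z_obs Z_imp U_imp hUmeas hZmeas hZimpmeas
    hUimpmeas hU hZimp hUimp hindep c
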